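/- arXiv:1610.09783 — 2 statements merged into one kernel-verified Lean document; each statement's English description precedes it below -/
import Mathlib

section
/- Let M be a mixed graph whose underlying graph M_U is r-regular with r ≠ 0, and let p = |det R_H(M)|. Then √(n/r + n(n-1)p^{2/n}) ≤ E_{R_H}(M) ≤ n/√r. -/
open Matrix BigOperators

noncomputable section
open scoped Classical

/-- A mixed graph on vertex set `V`, encoded by its Hermitian-adjacency matrix:
entries are `1` for undirected edges, `i`/`-i` for arcs, `0` otherwise. -/
structure MixedGraph (V : Type) [Fintype V] [DecidableEq V] where
  h : Matrix V V ℂ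
  herm : h.IsHermitian
  loopless : ∀ k, h k k = 0
  entries : ∀ k l, h k l = 0 ∨ h k l = 1 ∨ h k l = Complex.I ∨ h k l = -Complex.I

namespace MixedGraph

variable {V : Type} [Fintype V] [DecidableEq V]

/-- Degree of a vertex in the underlying graph. -/
def deg (M : MixedGraph V) (k : V) : ℕ :=
  (Finset.univ.filter fun l => M.h k l ≠ 0).card

/-- The Hermitian–Randić matrix of a mixed graph. -/
def RH (M : MixedGraph V) : Matrix V V ℂ :=
  fun k l => M.h k l / ((Real.sqrt (M.deg k) * Real.sqrt (M.deg l) : ℝ) : ℂ)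

theorem RH_isHermitian (M : MixedGraph V) : (M.RH).IsHermitian := by
  ext k l
  simp only [RH, Matrix.conjTranspose_apply, star_div₀, Complex.star_def,
    Complex.conj_ofReal, M.herm.apply k l, mul_comm (Real.sqrt (M.deg l))]

/-- The Hermitian–Randić energy: sum of absolute values of the eigenvalues of `RH`. -/
def energyRH (M : MixedGraph V) : ℝ := ∑ i, |M.RH_isHermitian.eigenvalues i|

/-- The Hermitian energy: sum of absolute values of the eigenvalues of `H(M)`. -/
def energyH (M : MixedGraph V) : ℝ := ∑ i, |M.herm.eigenvalues i|

/-- The general Randić index `R₋₁` of the underlying graph. -/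
def Rm1 (M : MixedGraph V) : ℝ :=
  (1 / 2) * ∑ k, ∑ l, if M.h k l ≠ 0 then ((M.deg k : ℝ) * (M.deg l : ℝ))⁻¹ else 0

/-- The underlying simple graph of a mixed graph. -/
def underlying (M : MixedGraph V) : SimpleGraph V where
  Adj k l := M.h k l ≠ 0
  symm := by
    refine ⟨?_⟩
    intro k l hkl h0
    exact hkl (by rw [← M.herm.apply k l, h0, star_zero])
  loopless := ⟨fun k hk => hk (M.loopless k)⟩

end MixedGraph

/-!
The eigenvalues `λᵢ` of the Hermitian matrix `R_H(M)` are real, with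
`∑ λᵢ² = ∑ₖₗ |R_H(M)ₖₗ|² = 2 R₋₁(M) = n / r` and `∏ |λᵢ| = |det R_H(M)|`.
For `E = ∑ |λᵢ|`, Cauchy–Schwarz gives `E² ≤ n ∑ λᵢ²`. Conversely
`E² = ∑ λᵢ² + ∑_{i ≠ j} |λᵢ| |λⱼ|`, and AM–GM applied to the `n (n - 1)` off-diagonal products,
whose product is `(∏ |λᵢ|) ^ (2 (n - 1))`, bounds the second sum below by `n (n - 1) p ^ (2 / n)`.
-/

open Finset

namespace Finset

variable {ι : Type*} [DecidableEq ι]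

theorem sq_sum_eq_sum_sq_add_sum_offDiag {R : Type*} [CommSemiring R] (s : Finset ι) (f : ι → R) :
    (∑ i ∈ s, f i) ^ 2 = ∑ i ∈ s, f i ^ 2 + ∑ q ∈ s.offDiag, f q.1 * f q.2 := by
  rw [sq, sum_mul_sum, ← sum_product', ← diag_union_offDiag, sum_union (disjoint_diag_offDiag _),
    sum_diag]
  simp only [sq]

theorem prod_offDiag_fst {M : Type*} [CommMonoid M] (s : Finset ι) (f : ι → M) :
    ∏ q ∈ s.offDiag, f q.1 = (∏ i ∈ s, f i) ^ (#s - 1) := by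
  have hoff : s.offDiag = (s ×ˢ s).filter fun q => q.1 ≠ q.2 := by ext; simp [and_assoc]
  rw [hoff, prod_filter, prod_product, ← prod_pow]
  refine prod_congr rfl fun i hi => ?_
  rw [← prod_filter, filter_ne]
  exact (prod_const (f i)).trans (congrArg _ (card_erase_of_mem hi))

theorem prod_offDiag_mul {M : Type*} [CommMonoid M] (s : Finset ι) (f : ι → M) :
    ∏ q ∈ s.offDiag, f q.1 * f q.2 = (∏ i ∈ s, f i) ^ (2 * (#s - 1)) := by
  have hswap : ∏ q ∈ s.offDiag, f q.2 = ∏ q ∈ s.offDiag, f q.1 :=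
    prod_equiv (Equiv.prodComm ι ι) (by simp [and_left_comm, ne_comm]) (by simp)
  rw [prod_mul_distrib, hswap, prod_offDiag_fst, ← pow_add, two_mul]

end Finset

theorem Real.sum_sq_add_mul_prod_rpow_le_sq_sum {ι : Type*} [DecidableEq ι] (s : Finset ι)
    (a : ι → ℝ) (ha : ∀ i ∈ s, 0 ≤ a i) :
    ∑ i ∈ s, a i ^ 2 + #s * (#s - 1 : ℝ) * (∏ i ∈ s, a i) ^ ((2 : ℝ) / #s) ≤ (∑ i ∈ s, a i) ^ 2 := by
  rw [sq_sum_eq_sum_sq_add_sum_offDiag]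
  gcongr ∑ i ∈ s, a i ^ 2 + ?_
  have hoff : ∀ q ∈ s.offDiag, 0 ≤ a q.1 * a q.2 := fun q hq => by
    rw [mem_offDiag] at hq
    exact mul_nonneg (ha _ hq.1) (ha _ hq.2.1)
  obtain hs | hs : #s < 2 ∨ 2 ≤ #s := lt_or_ge _ _
  · have hN : (#s : ℝ) * (#s - 1) = 0 := by
      obtain h | h : #s = 0 ∨ #s = 1 := by omega
      all_goals simp [h]
    rw [hN, zero_mul]
    exact sum_nonneg hoff
  have hN : ((#s.offDiag : ℕ) : ℝ) = #s * (#s - 1 : ℝ) := by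
    rw [offDiag_card, Nat.cast_sub (Nat.le_mul_self _), Nat.cast_mul]
    ring
  have hNpos : (0 : ℝ) < #s * (#s - 1 : ℝ) := by
    have : (2 : ℝ) ≤ #s := by exact_mod_cast hs
    nlinarith
  have amgm := Real.geom_mean_le_arith_mean s.offDiag (fun _ => 1) (fun q => a q.1 * a q.2)
    (fun _ _ => zero_le_one) (by simp; omega) hoff
  simp only [Real.rpow_one, one_mul, sum_const, nsmul_eq_mul, mul_one, hN, prod_offDiag_mul] at amgm
  have hexp : ((2 * (#s - 1) : ℕ) : ℝ) * (#s * (#s - 1 : ℝ))⁻¹ = 2 / #s := by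
    have : (#s - 1 : ℝ) ≠ 0 := by nlinarith
    push_cast [Nat.cast_sub (by omega : 1 ≤ #s)]
    field_simp
  rw [← Real.rpow_natCast, ← Real.rpow_mul (prod_nonneg ha), hexp] at amgm
  calc _ ≤ #s * (#s - 1 : ℝ) * ((∑ q ∈ s.offDiag, a q.1 * a q.2) / (#s * (#s - 1 : ℝ))) := by
        gcongr
    _ = _ := mul_div_cancel₀ _ hNpos.ne'

namespace Matrix.IsHermitian

variable {𝕜 n : Type*} [RCLike 𝕜] [Fintype n] [DecidableEq n] {A : Matrix n n 𝕜}

theorem sum_eigenvalues_sq_eq_sum_norm_sq (hA : A.IsHermitian) :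
    ∑ i, hA.eigenvalues i ^ 2 = ∑ k, ∑ l, ‖A k l‖ ^ 2 := by
  have htrace : (A * A).trace = ∑ i, (hA.eigenvalues i : 𝕜) ^ 2 := by
    conv_lhs => rw [hA.spectral_theorem, ← map_mul, Unitary.conjStarAlgAut_apply,
      trace_mul_cycle, Unitary.coe_star_mul_self, one_mul, diagonal_mul_diagonal, trace_diagonal]
    simp [sq]
  have hentry : ∀ k l, A k l * A l k = (‖A k l‖ ^ 2 : 𝕜) := fun k l => by
    rw [← hA.apply l k, RCLike.star_def, RCLike.mul_conj]
  apply RCLike.ofReal_injective (K := 𝕜)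
  push_cast
  rw [← htrace]
  simp only [trace, diag_apply, mul_apply, hentry]

theorem norm_det_eq_prod_abs_eigenvalues (hA : A.IsHermitian) :
    ‖A.det‖ = ∏ i, |hA.eigenvalues i| := by
  simp [hA.det_eq_prod_eigenvalues, norm_prod]

theorem sqrt_sum_eigenvalues_sq_add_le_sum_abs_eigenvalues (hA : A.IsHermitian) :
    √(∑ i, hA.eigenvalues i ^ 2 + Fintype.card n * (Fintype.card n - 1 : ℝ) *
      ‖A.det‖ ^ ((2 : ℝ) / Fintype.card n)) ≤ ∑ i, |hA.eigenvalues i| := by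
  rw [Real.sqrt_le_iff]
  refine ⟨sum_nonneg fun i _ => abs_nonneg _, ?_⟩
  simpa only [← sq_abs (hA.eigenvalues _), hA.norm_det_eq_prod_abs_eigenvalues, card_univ] using
    Real.sum_sq_add_mul_prod_rpow_le_sq_sum univ (fun i => |hA.eigenvalues i|)
      (fun i _ => abs_nonneg _)

theorem sum_abs_eigenvalues_le_sqrt (hA : A.IsHermitian) :
    ∑ i, |hA.eigenvalues i| ≤ √(Fintype.card n * ∑ i, hA.eigenvalues i ^ 2) := by
  apply Real.le_sqrt_of_sq_le
  simpa only [sq_abs, card_univ] using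
    sq_sum_le_card_mul_sum_sq (s := univ) (f := fun i => |hA.eigenvalues i|)

end Matrix.IsHermitian

namespace MixedGraph

variable {V : Type} [Fintype V] [DecidableEq V]

theorem norm_h_of_ne_zero (M : MixedGraph V) {k l : V} (hkl : M.h k l ≠ 0) : ‖M.h k l‖ = 1 := by
  rcases M.entries k l with h | h | h | h <;> simp_all

theorem norm_RH_sq (M : MixedGraph V) (k l : V) :
    ‖M.RH k l‖ ^ 2 = if M.h k l ≠ 0 then ((M.deg k : ℝ) * M.deg l)⁻¹ else 0 := by
  split_ifs with hkl
  · rw [RH, norm_div, M.norm_h_of_ne_zero hkl, Complex.norm_real,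
      Real.norm_of_nonneg (by positivity), div_pow, mul_pow, Real.sq_sqrt (Nat.cast_nonneg _),
      Real.sq_sqrt (Nat.cast_nonneg _), one_pow, one_div]
  · simp [RH, not_not.mp hkl]

theorem sum_norm_RH_sq (M : MixedGraph V) : ∑ k, ∑ l, ‖M.RH k l‖ ^ 2 = 2 * M.Rm1 := by
  simp only [norm_RH_sq, Rm1]
  ring

theorem Rm1_of_regular (M : MixedGraph V) {r : ℕ} (hreg : ∀ k, M.deg k = r) :
    M.Rm1 = Fintype.card V / (2 * r) := by
  have hrow : ∀ k, (∑ l, if M.h k l ≠ 0 then ((M.deg k : ℝ) * M.deg l)⁻¹ else 0) = (r : ℝ)⁻¹ := by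
    intro k
    simp only [hreg, sum_ite, sum_const_zero, add_zero, sum_const, nsmul_eq_mul]
    rw [show #{l | M.h k l ≠ 0} = r from hreg k]
    rcases eq_or_ne (r : ℝ) 0 with hr | hr
    · simp [hr]
    · field_simp
  simp only [Rm1, hrow, sum_const, card_univ, nsmul_eq_mul]
  ring

end MixedGraph

theorem energyRH_bounds_regular_general {V : Type} [Fintype V] [DecidableEq V]
    (M : MixedGraph V) (r : ℕ) (hreg : ∀ k, M.deg k = r) :
    Real.sqrt ((Fintype.card V : ℝ) / (r : ℝ) +
        (Fintype.card V : ℝ) * ((Fintype.card V : ℝ) - 1) *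
          (‖M.RH.det‖) ^ ((2 : ℝ) / (Fintype.card V : ℝ))) ≤ M.energyRH ∧
      M.energyRH ≤ (Fintype.card V : ℝ) / Real.sqrt (r : ℝ) := by
  have hsq : ∑ i, M.RH_isHermitian.eigenvalues i ^ 2 = Fintype.card V / r := by
    rw [M.RH_isHermitian.sum_eigenvalues_sq_eq_sum_norm_sq, M.sum_norm_RH_sq,
      M.Rm1_of_regular hreg]
    ring
  constructor
  · rw [← hsq]
    exact M.RH_isHermitian.sqrt_sum_eigenvalues_sq_add_le_sum_abs_eigenvalues
  · calc M.energyRH ≤ √(Fintype.card V * (Fintype.card V / r)) :=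
          hsq ▸ M.RH_isHermitian.sum_abs_eigenvalues_le_sqrt
      _ = Fintype.card V / √r := by
          rw [← mul_div_assoc, ← sq, Real.sqrt_div (sq_nonneg _), Real.sqrt_sq (Nat.cast_nonneg _)]

/-- if the underlying graph is `r`-regular (`r ≠ 0`) then, with
`p = |det R_H(M)|`, `√(n/r + n(n-1)p^{2/n}) ≤ E_{R_H}(M) ≤ n/√r`. -/
theorem energyRH_bounds_regular {V : Type} [Fintype V] [DecidableEq V]
    (M : MixedGraph V) (r : ℕ) (hr : r ≠ 0) (hreg : ∀ k, M.deg k = r) :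
    Real.sqrt ((Fintype.card V : ℝ) / (r : ℝ) +
        (Fintype.card V : ℝ) * ((Fintype.card V : ℝ) - 1) *
          (‖M.RH.det‖) ^ ((2 : ℝ) / (Fintype.card V : ℝ))) ≤ M.energyRH ∧
      M.energyRH ≤ (Fintype.card V : ℝ) / Real.sqrt (r : ℝ) :=
  energyRH_bounds_regular_general M r hreg
end
end

section
/- If M is a mixed bipartite graph (its underlying graph is bipartite), then the spectrum of its Hermitian-Randić matrix R_H(M) is symmetric about 0; in particular, all odd-indexed coefficients a_{2k+1} of the characteristic polynomial of R_H(M) vanish. -/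
/-!
A bipartition `f` gives the diagonal sign matrix `D = diag(±1)` with `D² = 1` and `D A D = -A`
whenever `A` is supported on edges between the two classes, so `A` and `-A` have the same
characteristic polynomial. Since `χ_{-A}(x) = (-1)ⁿ χ_A(-x)`, the roots of `χ_A` are closed under
negation (for a Hermitian `A` these are its eigenvalues, counted with multiplicity), and the
coefficient of `x^{n-j}` satisfies `a = (-1)^j a`, hence vanishes for odd `j`.
-/

open Matrix BigOperators

noncomputable section
open scoped Classical

open Polynomial

theorem Polynomial.coeff_comp_neg_X {R : Type*} [CommRing R] (p : R[X]) (k : ℕ) :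
    (p.comp (-X)).coeff k = (-1) ^ k * p.coeff k := by
  induction p using Polynomial.induction_on' with
  | add p q hp hq => simp [add_comp, hp, hq, mul_add]
  | monomial m a =>
    rw [← C_mul_X_pow_eq_monomial, C_mul_comp, X_pow_comp, neg_pow, ← mul_assoc, ← C_1, ← C_neg,
      ← C_pow, ← C_mul, coeff_C_mul_X_pow, coeff_C_mul_X_pow]
    split_ifs with h
    · subst h; ring
    · simp

namespace Matrix

variable {n R : Type*} [Fintype n] [DecidableEq n]

theorem charpoly_neg [CommRing R] (A : Matrix n n R) :
    (-A).charpoly = (-1) ^ Fintype.card n * A.charpoly.comp (-X) := by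
  have hmap : (compRingHom (-X : R[X])).mapMatrix (charmatrix A) = -charmatrix (-A) := by
    ext i j
    by_cases h : i = j
    · subst h; simp [sub_eq_neg_add, add_comm]
    · simp [h]
  have hdet : A.charpoly.comp (-X) = (-1) ^ Fintype.card n * (-A).charpoly := by
    simpa [charpoly, hmap, det_neg] using (compRingHom (-X : R[X])).map_det (charmatrix A)
  rw [hdet, ← mul_assoc, ← pow_add, ← two_mul, pow_mul]
  simp

theorem roots_charpoly_neg [CommRing R] [IsDomain R] (A : Matrix n n R) :
    (-A).charpoly.roots = A.charpoly.roots.map Neg.neg := by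
  rw [charpoly_neg, ← C_1, ← C_neg, ← C_pow,
    roots_C_mul _ (pow_ne_zero _ (neg_ne_zero.2 one_ne_zero)), roots_comp_neg_X]

theorem coeff_charpoly_eq_zero_of_charpoly_neg_eq [CommRing R] [IsAddTorsionFree R]
    {A : Matrix n n R} (h : (-A).charpoly = A.charpoly) {j : ℕ} (hj : Odd j)
    (hjn : j ≤ Fintype.card n) :
    A.charpoly.coeff (Fintype.card n - j) = 0 := by
  have hcoeff := congrArg (coeff · (Fintype.card n - j)) h
  have hsign : (-1 : R) ^ (Fintype.card n + (Fintype.card n - j)) = -1 := by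
    obtain ⟨m, rfl⟩ := hj
    exact Odd.neg_one_pow ⟨Fintype.card n - (2 * m + 1) + m, by omega⟩
  simp only [charpoly_neg, ← C_1, ← C_neg, ← C_pow, coeff_C_mul, coeff_comp_neg_X, ← mul_assoc,
    ← pow_add, hsign, neg_one_mul] at hcoeff
  exact neg_eq_self.mp hcoeff

theorem charpoly_neg_eq_of_bipartite [CommRing R] (A : Matrix n n R) (f : n → Bool)
    (hA : ∀ k l, A k l ≠ 0 → f k ≠ f l) :
    (-A).charpoly = A.charpoly := by
  set D : Matrix n n R := diagonal fun k => if f k then 1 else -1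
  have hDD : D * D = 1 := by
    rw [diagonal_mul_diagonal, ← diagonal_one]
    congr 1; funext k; split_ifs <;> simp
  have hDAD : D * A * D = -A := by
    ext k l
    by_cases h : A k l = 0
    · simp [D, h]
    · have := hA k l h
      cases hk : f k <;> cases hl : f l <;> simp_all [D]
  rw [← hDAD, charpoly_mul_comm, ← mul_assoc, hDD, one_mul]

end Matrix

theorem Fintype.exists_equiv_apply_eq_of_map_univ_eq {α β : Type*} [Fintype α] [DecidableEq β]
    {f g : α → β} (h : Finset.univ.val.map f = Finset.univ.val.map g) :
    ∃ σ : α ≃ α, ∀ a, g (σ a) = f a := by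
  have hcard (b : β) : Fintype.card {a // f a = b} = Fintype.card {a // g a = b} := by
    simpa [Fintype.card_subtype, Multiset.count_map, Finset.card, eq_comm]
      using congrArg (Multiset.count b) h
  exact ⟨Equiv.ofFiberEquiv fun b => Fintype.equivOfCardEq (hcard b), Equiv.ofFiberEquiv_map _⟩

theorem Matrix.IsHermitian.exists_equiv_eigenvalues_eq_neg_of_charpoly_neg_eq {n 𝕜 : Type*}
    [Fintype n] [DecidableEq n] [RCLike 𝕜] {A : Matrix n n 𝕜} (hA : A.IsHermitian)
    (h : (-A).charpoly = A.charpoly) :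
    ∃ σ : n ≃ n, ∀ i, hA.eigenvalues (σ i) = -hA.eigenvalues i := by
  have hroots := A.roots_charpoly_neg
  rw [h, hA.roots_charpoly_eq_eigenvalues, Multiset.map_map] at hroots
  refine Fintype.exists_equiv_apply_eq_of_map_univ_eq
    (Multiset.map_injective (RCLike.ofReal_injective (K := 𝕜)) ?_)
  simpa [Multiset.map_map, Function.comp_def] using hroots.symm

/-- if `M` is a mixed bipartite graph, the spectrum of `R_H(M)` is
symmetric about 0; in particular all odd coefficients `a_{2k+1}` of its
characteristic polynomial `xⁿ + a₁xⁿ⁻¹ + ⋯ + aₙ` vanish. -/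
theorem spectrum_symm_of_bipartite {V : Type} [Fintype V] [DecidableEq V]
    (M : MixedGraph V) (f : V → Bool)
    (hbip : ∀ k l, M.h k l ≠ 0 → f k ≠ f l) :
    (∃ σ : V ≃ V, ∀ i,
        M.RH_isHermitian.eigenvalues (σ i) = -M.RH_isHermitian.eigenvalues i) ∧
      ∀ j, Odd j → j ≤ Fintype.card V →
        M.RH.charpoly.coeff (Fintype.card V - j) = 0 := by
  have hRH : ∀ k l, M.RH k l ≠ 0 → f k ≠ f l := fun k l hkl =>
    hbip k l fun h0 => hkl (by simp [MixedGraph.RH, h0])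
  have hneg := M.RH.charpoly_neg_eq_of_bipartite f hRH
  exact ⟨M.RH_isHermitian.exists_equiv_eigenvalues_eq_neg_of_charpoly_neg_eq hneg,
    fun _ hj hjn => Matrix.coeff_charpoly_eq_zero_of_charpoly_neg_eq hneg hj hjn⟩
end
end
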